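/- (Identification, Theorem 3.2). Under the stated model, let z_i : Ω → ℝ^L be a bounded random vector measurable with respect to σ((x_j)_{j=1}^N, D_N), let w_i : Ω → ℝ^p be a bounded random vector, let β⁰ ∈ ℝ^p, and set y_i := ⟨w_i, β⁰⟩ + υ_i, where υ_i is bounded. Assume the rank condition: the L×p matrix M := 𝔼[(z_i − 𝔼[z_i|σ(a_i)])(w_i − 𝔼[w_i|σ(a_i)])ᵀ] has rank p (full column rank). Then for every β ∈ ℝ^p: 𝔼[(z_i − 𝔼[z_i|σ(a_i)])(y_i − 𝔼[y_i|σ(a_i)] − ⟨w_i − 𝔼[w_i|σ(a_i)], β⟩)] = 0 if and only if β = β⁰. -/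

import Mathlib

/-!
Write `ṽ = v - 𝔼[v | aᵢ]`. The outcome equation gives `ỹᵢ - ⟨w̃ᵢ, β⟩ = ⟨w̃ᵢ, β⁰ - β⟩ + υ̃ᵢ`, so the
moment vector is `M (β⁰ - β) + 𝔼[z̃ᵢ υ̃ᵢ]`. The instrument `z̃ᵢ` is measurable with respect to
`𝓑 = σ(xᵢ, aᵢ) ⊔ σ((xⱼ, aⱼ, υⱼ)_{j ≠ i}) ⊔ σ(u)`. The link errors and the other individuals are
independent of `(xᵢ, aᵢ, υᵢ)`, so they can be dropped when conditioning `υᵢ` on `𝓑`, and the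
fixed-effect assumption reduces `𝔼[υᵢ | xᵢ, aᵢ]` to `𝔼[υᵢ | aᵢ]`. Thus `υ̃ᵢ = υᵢ - 𝔼[υᵢ | 𝓑]` is
orthogonal to the bounded `𝓑`-measurable `z̃ᵢ`, and full column rank of `M` makes
`β ↦ M (β⁰ - β)` injective.
-/

open MeasureTheory ProbabilityTheory

namespace MeasurableSpace

variable {Ω : Type*}

theorem isPiSystem_image2_inter (m₁ m₂ : MeasurableSpace Ω) :
    IsPiSystem (Set.image2 (· ∩ ·) {s | MeasurableSet[m₁] s} {t | MeasurableSet[m₂] t}) := by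
  rintro _ ⟨s, hs, t, ht, rfl⟩ _ ⟨s', hs', t', ht', rfl⟩ -
  exact ⟨s ∩ s', hs.inter hs', t ∩ t', ht.inter ht', (Set.inter_inter_inter_comm s t s' t').symm⟩

theorem sup_eq_generateFrom_image2_inter (m₁ m₂ : MeasurableSpace Ω) :
    m₁ ⊔ m₂ = generateFrom (Set.image2 (· ∩ ·) {s | MeasurableSet[m₁] s}
      {t | MeasurableSet[m₂] t}) := by
  refine le_antisymm (sup_le ?_ ?_) (generateFrom_le ?_)
  · exact fun s hs => measurableSet_generateFrom ⟨s, hs, Set.univ, .univ, Set.inter_univ s⟩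
  · exact fun t ht => measurableSet_generateFrom ⟨Set.univ, .univ, t, ht, Set.univ_inter t⟩
  · rintro _ ⟨s, hs, t, ht, rfl⟩
    exact (le_sup_left (b := m₂) s hs).inter (le_sup_right (a := m₁) t ht)

end MeasurableSpace

section

variable {Ω : Type*} {m m₀ : MeasurableSpace Ω} {μ : Measure Ω}

theorem setIntegral_eq_of_isPiSystem {S : Set (Set Ω)} (hm : m ≤ m₀)
    (h_gen : m = MeasurableSpace.generateFrom S) (h_pi : IsPiSystem S) {f g : Ω → ℝ}
    (hf : Integrable f μ) (hg : Integrable g μ) (h_univ : ∫ ω, f ω ∂μ = ∫ ω, g ω ∂μ)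
    (h_basic : ∀ s ∈ S, ∫ ω in s, f ω ∂μ = ∫ ω in s, g ω ∂μ) {s : Set Ω}
    (hs : MeasurableSet[m] s) : ∫ ω in s, f ω ∂μ = ∫ ω in s, g ω ∂μ := by
  induction s, hs using MeasurableSpace.induction_on_inter h_gen h_pi with
  | empty => simp
  | basic s hs => exact h_basic s hs
  | compl s hs ih =>
    rw [setIntegral_compl (hm s hs) hf, setIntegral_compl (hm s hs) hg, ih, h_univ]
  | iUnion s hdisj hs ih =>
    rw [integral_iUnion (fun n => hm _ (hs n)) hdisj hf.integrableOn,
      integral_iUnion (fun n => hm _ (hs n)) hdisj hg.integrableOn]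
    exact tsum_congr ih

theorem condExp_sup_ae_eq_of_indep [IsFiniteMeasure μ] {m₁ m₂ : MeasurableSpace Ω}
    (hm₁ : m₁ ≤ m₀) (hm₂ : m₂ ≤ m₀) {f : Ω → ℝ} (hf : Integrable f μ)
    (h_indep : Indep m₂ (m₁ ⊔ MeasurableSpace.comap f inferInstance) μ) :
    μ[f | m₁ ⊔ m₂] =ᵐ[μ] μ[f | m₁] := by
  have h_mul : ∀ g : Ω → ℝ, Measurable[m₁ ⊔ MeasurableSpace.comap f inferInstance] g →
      Integrable g μ → ∀ s t, MeasurableSet[m₁] s → MeasurableSet[m₂] t →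
      ∫ ω in s ∩ t, g ω ∂μ = μ.real t * ∫ ω in s, g ω ∂μ := by
    intro g hg hgi s t hs ht
    have hX : Measurable[m₁ ⊔ MeasurableSpace.comap f inferInstance] (s.indicator g) :=
      hg.indicator (le_sup_left (b := MeasurableSpace.comap f inferInstance) s hs)
    rw [Set.inter_comm, ← setIntegral_indicator (hm₁ s hs), ← integral_indicator (hm₁ s hs)]
    exact (indep_of_indep_of_le_right h_indep hX.comap_le).setIntegral_eq_mul (f := id) hm₂
      (hgi.indicator (hm₁ s hs)).aemeasurable ht aestronglyMeasurable_id
  refine (ae_eq_condExp_of_forall_setIntegral_eq (sup_le hm₁ hm₂) hf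
    (fun _ _ _ => integrable_condExp.integrableOn) (fun s hs _ => ?_)
    (stronglyMeasurable_condExp.mono le_sup_left).aestronglyMeasurable).symm
  refine setIntegral_eq_of_isPiSystem (sup_le hm₁ hm₂)
    (MeasurableSpace.sup_eq_generateFrom_image2_inter m₁ m₂)
    (MeasurableSpace.isPiSystem_image2_inter m₁ m₂) integrable_condExp hf (integral_condExp hm₁)
    ?_ hs
  rintro _ ⟨s, hs, t, ht, rfl⟩
  rw [h_mul _ (stronglyMeasurable_condExp.measurable.mono le_sup_left le_rfl) integrable_condExp
    s t hs ht, h_mul f (comap_measurable f |>.mono le_sup_right le_rfl) hf s t hs ht,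
    setIntegral_condExp hm₁ hf hs]

theorem integral_mul_sub_condExp_eq_zero [IsFiniteMeasure μ] (hm : m ≤ m₀) {g f : Ω → ℝ}
    {C : ℝ} (hg : StronglyMeasurable[m] g) (hg_bound : ∀ᵐ ω ∂μ, ‖g ω‖ ≤ C)
    (hf : Integrable f μ) :
    ∫ ω, g ω * (f ω - μ[f | m] ω) ∂μ = 0 := by
  have hgf : Integrable (g * f) μ := hf.bdd_mul (hg.mono hm).aestronglyMeasurable hg_bound
  have hgf' : Integrable (fun ω => g ω * μ[f | m] ω) μ :=
    integrable_condExp.bdd_mul (hg.mono hm).aestronglyMeasurable hg_bound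
  have h_pull : ∫ ω, g ω * f ω ∂μ = ∫ ω, g ω * μ[f | m] ω ∂μ :=
    (integral_condExp hm).symm.trans
      (integral_congr_ae (condExp_mul_of_stronglyMeasurable_left hg hgf hf))
  simp_rw [mul_sub]
  rw [integral_sub (f := fun ω => g ω * f ω) hgf hgf', h_pull, sub_self]

theorem ae_norm_sub_condExp_le {z : Ω → ℝ} {C : ℝ} (hz : ∀ ω, |z ω| ≤ C) :
    ∀ᵐ ω ∂μ, ‖z ω - μ[z | m] ω‖ ≤ C + C := by
  filter_upwards [ae_bdd_abs_condExp_of_ae_bdd_abs (m := m) (.of_forall hz)] with ω hω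
  exact (norm_sub_le _ _).trans (add_le_add (hz ω) hω)

theorem integral_sub_condExp_mul_sub_condExp_eq_zero [IsFiniteMeasure μ] {m' : MeasurableSpace Ω}
    (hm : m ≤ m') (hm' : m' ≤ m₀) {z υ : Ω → ℝ} {C : ℝ} (hz : StronglyMeasurable[m'] z)
    (hz_bound : ∀ ω, |z ω| ≤ C) (hυ : Integrable υ μ) (h_condExp : μ[υ | m'] =ᵐ[μ] μ[υ | m]) :
    ∫ ω, (z ω - μ[z | m] ω) * (υ ω - μ[υ | m] ω) ∂μ = 0 := by
  rw [← integral_mul_sub_condExp_eq_zero hm' (hz.sub (stronglyMeasurable_condExp.mono hm))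
    (ae_norm_sub_condExp_le hz_bound) hυ]
  refine integral_congr_ae ?_
  filter_upwards [h_condExp] with ω hω
  rw [hω]
  rfl

theorem condExp_sum_mul_add {ι : Type*} [Fintype ι] {w : Ω → ι → ℝ} {υ : Ω → ℝ} (β : ι → ℝ)
    (hw : ∀ j, Integrable (fun ω => w ω j) μ) (hυ : Integrable υ μ) :
    μ[fun ω => ∑ j, w ω j * β j + υ ω | m] =ᵐ[μ]
      fun ω => ∑ j, μ[fun ω' => w ω' j | m] ω * β j + μ[υ | m] ω := by
  have h_fun : (fun ω => ∑ j, w ω j * β j + υ ω) = ∑ j, β j • (fun ω => w ω j) + υ := by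
    ext ω; simp [mul_comm]
  have h_sum : μ[∑ j, β j • (fun ω => w ω j) | m] =ᵐ[μ] ∑ j, β j • μ[fun ω => w ω j | m] :=
    (condExp_finsetSum (fun j _ => (hw j).smul (β j)) m).trans
      (eventuallyEq_sum fun j _ => condExp_smul (β j) _ m)
  rw [h_fun]
  filter_upwards [condExp_add (integrable_finsetSum' Finset.univ fun j _ => (hw j).smul (β j))
    hυ m, h_sum] with ω h_add h_sum
  simp [h_add, h_sum, mul_comm]

theorem integral_mul_sub_condExp_sub_sum_mul {ι : Type*} [Fintype ι]
    {g y υ : Ω → ℝ} {w : Ω → ι → ℝ} {C : ℝ} {β₀ : ι → ℝ} (hg : AEStronglyMeasurable g μ)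
    (hg_bound : ∀ᵐ ω ∂μ, ‖g ω‖ ≤ C) (hy : ∀ ω, y ω = ∑ j, w ω j * β₀ j + υ ω)
    (hw : ∀ j, Integrable (fun ω => w ω j) μ) (hυ : Integrable υ μ) (β : ι → ℝ) :
    ∫ ω, g ω * ((y ω - μ[y | m] ω) -
        ∑ j, (w ω j - μ[fun ω' => w ω' j | m] ω) * β j) ∂μ =
      ∑ j, (∫ ω, g ω * (w ω j - μ[fun ω' => w ω' j | m] ω) ∂μ) * (β₀ j - β j) +
        ∫ ω, g ω * (υ ω - μ[υ | m] ω) ∂μ := by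
  have hgw : ∀ j, Integrable (fun ω => g ω * (w ω j - μ[fun ω' => w ω' j | m] ω)) μ :=
    fun j => ((hw j).sub integrable_condExp).bdd_mul hg hg_bound
  have hgυ : Integrable (fun ω => g ω * (υ ω - μ[υ | m] ω)) μ :=
    (hυ.sub integrable_condExp).bdd_mul hg hg_bound
  have h_condExp : μ[y | m] =ᵐ[μ] fun ω => ∑ j, μ[fun ω' => w ω' j | m] ω * β₀ j + μ[υ | m] ω := by
    rw [funext hy]
    exact condExp_sum_mul_add β₀ hw hυ
  simp_rw [← integral_mul_const]
  rw [← integral_finsetSum _ fun j _ => (hgw j).mul_const _,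
    ← integral_add (integrable_finsetSum _ fun j _ => (hgw j).mul_const _) hgυ]
  refine integral_congr_ae ?_
  filter_upwards [h_condExp] with ω hω
  rw [hy ω, hω]
  simp only [mul_sub, sub_mul, Finset.sum_sub_distrib, mul_assoc, ← Finset.mul_sum]
  ring

end

theorem Matrix.mulVec_injective_of_rank_eq_card {m n K : Type*} [Fintype n] [Field K]
    {A : Matrix m n K} (hA : A.rank = Fintype.card n) : Function.Injective A.mulVec := by
  have h_ker : Module.finrank K (LinearMap.ker A.mulVecLin) = 0 := by
    have := LinearMap.finrank_range_add_finrank_ker A.mulVecLin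
    rw [Module.finrank_fintype_fun_eq_card, ← Matrix.rank, hA] at this
    omega
  rw [← Matrix.coe_mulVecLin, ← LinearMap.ker_eq_bot]
  exact Submodule.finrank_eq_zero.mp h_ker

theorem ProbabilityTheory.iIndepFun.indep_iSup_ne {Ω ι : Type*} {mΩ : MeasurableSpace Ω}
    {μ : Measure Ω} {κ : ι → Type*} [∀ j, MeasurableSpace (κ j)] {f : ∀ j, Ω → κ j}
    (h : iIndepFun f μ) (hf : ∀ j, Measurable (f j)) (i : ι) :
    Indep (⨆ j ∈ ({i}ᶜ : Set ι), MeasurableSpace.comap (f j) inferInstance)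
      (MeasurableSpace.comap (f i) inferInstance) μ := by
  simpa using indep_iSup_of_disjoint (fun j => (hf j).comap_le) h.iIndep
    (disjoint_compl_left (a := ({i} : Set ι)))

section Model

variable {Ω ι X A U : Type*} {mΩ : MeasurableSpace Ω} [MeasurableSpace X] [MeasurableSpace A]
  [MeasurableSpace U] {μ : Measure Ω} {x : ι → Ω → X} {a : ι → Ω → A} {υ : ι → Ω → ℝ}
  {u : Ω → U}

abbrev sigmaOthers (x : ι → Ω → X) (a : ι → Ω → A) (υ : ι → Ω → ℝ) (i : ι) : MeasurableSpace Ω :=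
  ⨆ j ∈ ({i}ᶜ : Set ι), MeasurableSpace.comap (fun ω => (x j ω, a j ω, υ j ω)) inferInstance

theorem comap_pair_le_comap_triple (i : ι) :
    MeasurableSpace.comap (fun ω => (x i ω, a i ω)) inferInstance ≤
      MeasurableSpace.comap (fun ω => (x i ω, a i ω, υ i ω)) inferInstance :=
  MeasurableSpace.comap_le_comap_of_eq_comp (fun t => (t.1, t.2.1))
    (measurable_fst.prodMk (measurable_fst.comp measurable_snd)) rfl

theorem comap_outcome_error_le_comap_triple (i : ι) :
    MeasurableSpace.comap (υ i) inferInstance ≤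
      MeasurableSpace.comap (fun ω => (x i ω, a i ω, υ i ω)) inferInstance :=
  MeasurableSpace.comap_le_comap_of_eq_comp (fun t => t.2.2)
    (measurable_snd.comp measurable_snd) rfl

theorem indep_sigmaOthers (hx : ∀ j, Measurable (x j)) (ha : ∀ j, Measurable (a j))
    (hυ : ∀ j, Measurable (υ j)) (h_indep : iIndepFun (fun j ω => (x j ω, a j ω, υ j ω)) μ)
    (i : ι) :
    Indep (sigmaOthers x a υ i) (MeasurableSpace.comap (fun ω => (x i ω, a i ω)) inferInstance ⊔
      MeasurableSpace.comap (υ i) inferInstance) μ :=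
  indep_of_indep_of_le_right
    (h_indep.indep_iSup_ne (fun j => (hx j).prodMk ((ha j).prodMk (hυ j))) i)
    (sup_le (comap_pair_le_comap_triple i) (comap_outcome_error_le_comap_triple i))

theorem indep_comap_of_indepFun_triples
    (h_indep : IndepFun u (fun ω j => (x j ω, a j ω, υ j ω)) μ) (i : ι) :
    Indep (MeasurableSpace.comap u inferInstance)
      (MeasurableSpace.comap (fun ω => (x i ω, a i ω)) inferInstance ⊔ sigmaOthers x a υ i ⊔
        MeasurableSpace.comap (υ i) inferInstance) μ := by
  have h_triple : ∀ j, MeasurableSpace.comap (fun ω => (x j ω, a j ω, υ j ω)) inferInstance ≤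
      MeasurableSpace.comap (fun ω j => (x j ω, a j ω, υ j ω)) inferInstance :=
    MeasurableSpace.comap_le_comap_pi
  refine indep_of_indep_of_le_right ((IndepFun_iff_Indep _ _ _).1 h_indep) ?_
  refine sup_le (sup_le ?_ (iSup₂_le fun j _ => h_triple j)) ?_
  · exact (comap_pair_le_comap_triple i).trans (h_triple i)
  · exact (comap_outcome_error_le_comap_triple i).trans (h_triple i)

theorem measurable_characteristics_network {V : Type*} [MeasurableSpace V] {D : Ω → V}
    {G : (ι → X) × (ι → A) × U → V} (hG : Measurable G)
    (hD : ∀ ω, D ω = G (fun j => x j ω, fun j => a j ω, u ω)) (i : ι) :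
    Measurable[MeasurableSpace.comap (fun ω => (x i ω, a i ω)) inferInstance ⊔
        sigmaOthers x a υ i ⊔ MeasurableSpace.comap u inferInstance]
      (fun ω => (fun j => x j ω, D ω)) := by
  set mB := MeasurableSpace.comap (fun ω => (x i ω, a i ω)) inferInstance ⊔
    sigmaOthers x a υ i ⊔ MeasurableSpace.comap u inferInstance
  have h_pair : ∀ j, Measurable[mB] (fun ω => (x j ω, a j ω)) := by
    intro j
    by_cases hj : j = i
    · subst hj
      exact (comap_measurable _).mono (le_sup_left.trans le_sup_left) le_rfl
    · refine Measurable.of_comap_le (comap_pair_le_comap_triple (υ := υ) j |>.trans ?_)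
      exact (le_biSup (fun j => MeasurableSpace.comap (fun ω => (x j ω, a j ω, υ j ω))
        inferInstance) hj).trans (le_sup_right.trans le_sup_left)
  have hx : Measurable[mB] (fun ω j => x j ω) :=
    measurable_pi_lambda _ fun j => measurable_fst.comp (h_pair j)
  have ha : Measurable[mB] (fun ω j => a j ω) :=
    measurable_pi_lambda _ fun j => measurable_snd.comp (h_pair j)
  have hu : Measurable[mB] u := (comap_measurable u).mono le_sup_right le_rfl
  rw [funext hD]
  exact hx.prodMk (hG.comp (hx.prodMk (ha.prodMk hu)))

theorem exclusion_restriction [IsFiniteMeasure μ] {V : Type*} [MeasurableSpace V] {D : Ω → V}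
    {G : (ι → X) × (ι → A) × U → V} (hG : Measurable G)
    (hD : ∀ ω, D ω = G (fun j => x j ω, fun j => a j ω, u ω)) (hx : ∀ j, Measurable (x j))
    (ha : ∀ j, Measurable (a j)) (hυ : ∀ j, Measurable (υ j)) (hu : Measurable u)
    (h_iid : iIndepFun (fun j ω => (x j ω, a j ω, υ j ω)) μ)
    (hu_indep : IndepFun u (fun ω j => (x j ω, a j ω, υ j ω)) μ) (i : ι)
    (hυ_int : Integrable (υ i) μ)
    (h_fe : μ[υ i | MeasurableSpace.comap (fun ω => (x i ω, a i ω)) inferInstance] =ᵐ[μ]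
      μ[υ i | MeasurableSpace.comap (a i) inferInstance])
    {z : Ω → ℝ} {C : ℝ}
    (hz : Measurable[MeasurableSpace.comap (fun ω => (fun j => x j ω, D ω)) inferInstance] z)
    (hz_bound : ∀ ω, |z ω| ≤ C) :
    ∫ ω, (z ω - μ[z | MeasurableSpace.comap (a i) inferInstance] ω) *
      (υ i ω - μ[υ i | MeasurableSpace.comap (a i) inferInstance] ω) ∂μ = 0 := by
  set mH := MeasurableSpace.comap (fun ω => (x i ω, a i ω)) inferInstance
  set mB := mH ⊔ sigmaOthers x a υ i ⊔ MeasurableSpace.comap u inferInstance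
  have hmH : mH ≤ mΩ := ((hx i).prodMk (ha i)).comap_le
  have hmR : sigmaOthers x a υ i ≤ mΩ :=
    iSup₂_le fun j _ => ((hx j).prodMk ((ha j).prodMk (hυ j))).comap_le
  have hmA : MeasurableSpace.comap (a i) inferInstance ≤ mB :=
    (MeasurableSpace.comap_le_comap_of_eq_comp (f := fun ω => (x i ω, a i ω)) Prod.snd
      measurable_snd rfl).trans
      (le_sup_left.trans le_sup_left)
  have h_condExp : μ[υ i | mB] =ᵐ[μ] μ[υ i | MeasurableSpace.comap (a i) inferInstance] :=
    (condExp_sup_ae_eq_of_indep (sup_le hmH hmR) hu.comap_le hυ_int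
      (indep_comap_of_indepFun_triples hu_indep i)).trans <|
    (condExp_sup_ae_eq_of_indep hmH hmR hυ_int (indep_sigmaOthers hx ha hυ h_iid i)).trans h_fe
  exact integral_sub_condExp_mul_sub_condExp_eq_zero hmA (sup_le (sup_le hmH hmR) hu.comap_le)
    (hz.mono (measurable_characteristics_network hG hD i).comap_le le_rfl).stronglyMeasurable
    hz_bound hυ_int h_condExp

end Model

theorem identification_of_peer_effects_general
    {Ω : Type*} [MeasurableSpace Ω] (μ : Measure Ω) [IsProbabilityMeasure μ]
    (N d₁ d₂ L p : ℕ)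
    (x : Fin N → Ω → (Fin d₁ → ℝ) × (Fin d₂ → ℝ))
    (a : Fin N → Ω → ℝ)
    (υ : Fin N → Ω → ℝ)
    (u : Ω → Fin N → Fin N → ℝ)
    (hx : ∀ i, Measurable (x i)) (ha : ∀ i, Measurable (a i))
    (hυmeas : ∀ i, Measurable (υ i)) (hυint : ∀ i, Integrable (υ i) μ)
    (hu : Measurable u)
    -- (i) the triples (xᵢ, aᵢ, υᵢ), i = 1,…,N, are i.i.d.
    (hiid_indep : iIndepFun
      (fun i ω => (x i ω, a i ω, υ i ω)) μ)
    -- (ii) u is independent of the family ((xᵢ, aᵢ, υᵢ))ᵢ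
    (hu_indep : IndepFun u (fun ω => fun i : Fin N => (x i ω, a i ω, υ i ω)) μ)
    -- (iii) fixed effect: 𝔼[υᵢ | σ(xᵢ, aᵢ)] = 𝔼[υᵢ | σ(aᵢ)] a.s.
    (hfe : ∀ i, μ[υ i | MeasurableSpace.comap (fun ω => (x i ω, a i ω)) inferInstance]
      =ᵐ[μ] μ[υ i | MeasurableSpace.comap (a i) inferInstance])
    -- the network: D = F((x₂ⱼ)ⱼ, (aⱼ)ⱼ, u), F measurable
    (F : (Fin N → Fin d₂ → ℝ) × (Fin N → ℝ) × (Fin N → Fin N → ℝ) →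
      (Fin N → Fin N → ℝ))
    (hF : Measurable F)
    (D : Ω → (Fin N → Fin N → ℝ))
    (hD : ∀ ω, D ω = F (fun j => (x j ω).2, fun j => a j ω, u ω))
    (i : Fin N)
    -- the instruments: bounded and measurable w.r.t. σ((xⱼ)ⱼ, D)
    (z : Ω → Fin L → ℝ)
    (hz : Measurable[MeasurableSpace.comap (fun ω => (fun j => x j ω, D ω)) inferInstance] z)
    (Cz : ℝ) (hzb : ∀ ω l, |z ω l| ≤ Cz)
    -- the regressors: bounded
    (w : Ω → Fin p → ℝ) (hw : Measurable w) (Cw : ℝ) (hwb : ∀ ω j, |w ω j| ≤ Cw)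
    -- the outcome equation
    (β0 : Fin p → ℝ)
    (y : Ω → ℝ) (hy : ∀ ω, y ω = (∑ j, w ω j * β0 j) + υ i ω)
    -- rank condition
    (M : Matrix (Fin L) (Fin p) ℝ)
    (hM : ∀ l j, M l j =
      ∫ ω, (z ω l - (μ[fun ω' => z ω' l | MeasurableSpace.comap (a i) inferInstance]) ω)
        * (w ω j - (μ[fun ω' => w ω' j | MeasurableSpace.comap (a i) inferInstance]) ω) ∂μ)
    (hrank : M.rank = p) :
    ∀ β : Fin p → ℝ,
      (∀ l, ∫ ω,
          (z ω l - (μ[fun ω' => z ω' l | MeasurableSpace.comap (a i) inferInstance]) ω) *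
          ((y ω - (μ[y | MeasurableSpace.comap (a i) inferInstance]) ω) -
            ∑ j, (w ω j - (μ[fun ω' => w ω' j | MeasurableSpace.comap (a i) inferInstance]) ω)
              * β j) ∂μ = 0)
      ↔ β = β0 := by
  intro β
  have hD_meas : Measurable D := by
    rw [funext hD]
    fun_prop
  have hz_l : ∀ l, Measurable[MeasurableSpace.comap (fun ω => (fun j => x j ω, D ω))
      inferInstance] fun ω => z ω l := fun l => (measurable_pi_apply l).comp hz
  have hw_int : ∀ j, Integrable (fun ω => w ω j) μ := fun j =>
    .of_bound (hw.eval (a := j)).aestronglyMeasurable Cw (.of_forall (hwb · j))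
  have h_inj := Matrix.mulVec_injective_of_rank_eq_card (hrank.trans (Fintype.card_fin p).symm)
  refine (forall_congr' fun l => ?_).trans
    (?_ : (∀ l, M.mulVec (β0 - β) l = 0) ↔ β = β0)
  · rw [integral_mul_sub_condExp_sub_sum_mul
      (g := fun ω => z ω l - μ[fun ω' => z ω' l | MeasurableSpace.comap (a i) inferInstance] ω)
      (((hz_l l).mono ((measurable_pi_lambda _ hx).prodMk hD_meas).comap_le
        le_rfl).aestronglyMeasurable.sub integrable_condExp.aestronglyMeasurable)
      (ae_norm_sub_condExp_le (hzb · l)) hy hw_int (hυint i),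
      exclusion_restriction (G := fun p => F (fun j => (p.1 j).2, p.2)) (by fun_prop) hD hx ha
        hυmeas hu hiid_indep hu_indep i (hυint i) (hfe i) (hz_l l) (hzb · l), add_zero]
    simp [Matrix.mulVec, dotProduct, hM, mul_comm]
  · rw [eq_comm, ← sub_eq_zero, ← h_inj.eq_iff, Matrix.mulVec_zero, funext_iff]
    rfl

/-- **Identification (Theorem 3.2).**
Under the model (i.i.d. triples `(xᵢ, aᵢ, υᵢ)`, network errors `u` independent of them,
fixed-effect condition, network `D = F((x₂ⱼ)ⱼ, (aⱼ)ⱼ, u)`), with a bounded instrument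
vector `zᵢ` measurable w.r.t. `σ((xⱼ)ⱼ, D)`, a bounded regressor vector `wᵢ`, outcome
`yᵢ = ⟨wᵢ, β⁰⟩ + υᵢ` with bounded `υᵢ`, and the full-column-rank condition on
`M = 𝔼[(zᵢ − 𝔼[zᵢ|σ(aᵢ)])(wᵢ − 𝔼[wᵢ|σ(aᵢ)])ᵀ]`, the moment condition
`𝔼[(zᵢ − 𝔼[zᵢ|σ(aᵢ)])(yᵢ − 𝔼[yᵢ|σ(aᵢ)] − ⟨wᵢ − 𝔼[wᵢ|σ(aᵢ)], β⟩)] = 0`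
holds if and only if `β = β⁰`. -/
theorem identification_of_peer_effects
    {Ω : Type*} [MeasurableSpace Ω] (μ : Measure Ω) [IsProbabilityMeasure μ]
    (N d₁ d₂ L p : ℕ) (hN : 2 ≤ N)
    (x : Fin N → Ω → (Fin d₁ → ℝ) × (Fin d₂ → ℝ))
    (a : Fin N → Ω → ℝ)
    (υ : Fin N → Ω → ℝ)
    (u : Ω → Fin N → Fin N → ℝ)
    (hx : ∀ i, Measurable (x i)) (ha : ∀ i, Measurable (a i))
    (hυmeas : ∀ i, Measurable (υ i)) (hυint : ∀ i, Integrable (υ i) μ)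
    (hu : Measurable u)
    -- (i) the triples (xᵢ, aᵢ, υᵢ), i = 1,…,N, are i.i.d.
    (hiid_indep : iIndepFun
      (fun i ω => (x i ω, a i ω, υ i ω)) μ)
    (hiid_ident : ∀ i j, IdentDistrib (fun ω => (x i ω, a i ω, υ i ω))
      (fun ω => (x j ω, a j ω, υ j ω)) μ μ)
    -- (ii) u is independent of the family ((xᵢ, aᵢ, υᵢ))ᵢ
    (hu_indep : IndepFun u (fun ω => fun i : Fin N => (x i ω, a i ω, υ i ω)) μ)
    -- (iii) fixed effect: 𝔼[υᵢ | σ(xᵢ, aᵢ)] = 𝔼[υᵢ | σ(aᵢ)] a.s.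
    (hfe : ∀ i, μ[υ i | MeasurableSpace.comap (fun ω => (x i ω, a i ω)) inferInstance]
      =ᵐ[μ] μ[υ i | MeasurableSpace.comap (a i) inferInstance])
    -- the network: D = F((x₂ⱼ)ⱼ, (aⱼ)ⱼ, u), F measurable
    (F : (Fin N → Fin d₂ → ℝ) × (Fin N → ℝ) × (Fin N → Fin N → ℝ) →
      (Fin N → Fin N → ℝ))
    (hF : Measurable F)
    (D : Ω → (Fin N → Fin N → ℝ))
    (hD : ∀ ω, D ω = F (fun j => (x j ω).2, fun j => a j ω, u ω))
    (i : Fin N)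
    -- the instruments: bounded and measurable w.r.t. σ((xⱼ)ⱼ, D)
    (z : Ω → Fin L → ℝ)
    (hz : Measurable[MeasurableSpace.comap (fun ω => (fun j => x j ω, D ω)) inferInstance] z)
    (Cz : ℝ) (hzb : ∀ ω l, |z ω l| ≤ Cz)
    -- the regressors: bounded
    (w : Ω → Fin p → ℝ) (hw : Measurable w) (Cw : ℝ) (hwb : ∀ ω j, |w ω j| ≤ Cw)
    (Cυ : ℝ) (hυb : ∀ ω, |υ i ω| ≤ Cυ)
    -- the outcome equation
    (β0 : Fin p → ℝ)
    (y : Ω → ℝ) (hy : ∀ ω, y ω = (∑ j, w ω j * β0 j) + υ i ω)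
    -- rank condition
    (M : Matrix (Fin L) (Fin p) ℝ)
    (hM : ∀ l j, M l j =
      ∫ ω, (z ω l - (μ[fun ω' => z ω' l | MeasurableSpace.comap (a i) inferInstance]) ω)
        * (w ω j - (μ[fun ω' => w ω' j | MeasurableSpace.comap (a i) inferInstance]) ω) ∂μ)
    (hrank : M.rank = p) :
    ∀ β : Fin p → ℝ,
      (∀ l, ∫ ω,
          (z ω l - (μ[fun ω' => z ω' l | MeasurableSpace.comap (a i) inferInstance]) ω) *
          ((y ω - (μ[y | MeasurableSpace.comap (a i) inferInstance]) ω) -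
            ∑ j, (w ω j - (μ[fun ω' => w ω' j | MeasurableSpace.comap (a i) inferInstance]) ω)
              * β j) ∂μ = 0)
      ↔ β = β0 :=
  identification_of_peer_effects_general μ N d₁ d₂ L p x a υ u hx ha hυmeas hυint hu hiid_indep
    hu_indep hfe F hF D hD i z hz Cz hzb w hw Cw hwb β0 y hy M hM hrank
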